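/- arXiv:1705.01401 — 2 statements merged into one kernel-verified Lean document; each statement's English description precedes it below -/
import Mathlib

section
/- Let q : [0,∞) → ℝ be continuous and nonnegative, ξ ∈ ℝ with ξ ≠ 0, and let v solve v'' + |ξ|²v + q v' = 0 with initial data v(0) = v₀, v'(0) = v₁. Then |v(t)| ≤ (|v₀|² + |ξ|^{−2}|v₁|²)^{1/2} for all t ≥ 0. -/
open Set

open scoped RealInnerProductSpace

/-- Uniform pointwise bound at fixed nonzero frequency:
`|v(t)| ≤ (|v₀|² + |ξ|⁻²|v₁|²)^{1/2}`. -/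
theorem pointwise_bound_fixed_frequency
    (q : ℝ → ℝ) (ξ : ℝ) (hξ : ξ ≠ 0) (v : ℝ → ℂ) (v₀ v₁ : ℂ)
    (hq : Continuous q) (hq0 : ∀ t, 0 ≤ q t)
    (hv : ContDiff ℝ 2 v)
    (heq : ∀ t ∈ Ici (0 : ℝ),
      deriv (deriv v) t + ((|ξ| : ℝ) : ℂ) ^ 2 * v t + (q t : ℂ) * deriv v t = 0)
    (hv0 : v 0 = v₀) (hv1 : deriv v 0 = v₁) :
    ∀ t ∈ Ici (0 : ℝ),
      ‖v t‖ ≤ Real.sqrt (‖v₀‖ ^ 2 + ‖v₁‖ ^ 2 / |ξ| ^ 2) := by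
  have hcpos : (0 : ℝ) < |ξ| ^ 2 := by positivity
  set c : ℝ := |ξ| ^ 2 with hc
  set w : ℝ → ℂ := deriv v with hw
  have hv2 : ContDiff ℝ (1 + 1) v := by
    have : ((2 : ℕ) : WithTop ℕ∞) = 1 + 1 := by norm_num
    exact this ▸ (by exact_mod_cast hv : ContDiff ℝ ((2:ℕ) : WithTop ℕ∞) v)
  have hw1 : ContDiff ℝ 1 w := ((contDiff_succ_iff_deriv).mp hv2).2.2
  have hvdiff : Differentiable ℝ v := ((contDiff_succ_iff_deriv).mp hv2).1
  have hwdiff : Differentiable ℝ w := hw1.differentiable one_ne_zero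
  have hvd : ∀ t, HasDerivAt v (w t) t := fun t => (hvdiff t).hasDerivAt
  have hwd : ∀ t, HasDerivAt w (deriv w t) t := fun t => (hwdiff t).hasDerivAt
  set E : ℝ → ℝ := fun t => c * ⟪v t, v t⟫ + ⟪w t, w t⟫ with hE
  have hEd : ∀ t, HasDerivAt E
      (c * (⟪v t, w t⟫ + ⟪w t, v t⟫) + (⟪w t, deriv w t⟫ + ⟪deriv w t, w t⟫)) t := by
    intro t
    exact (((hvd t).inner ℝ (hvd t)).const_mul c).add ((hwd t).inner ℝ (hwd t))
  have hEderiv : ∀ t, deriv E t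
      = c * (⟪v t, w t⟫ + ⟪w t, v t⟫) + (⟪w t, deriv w t⟫ + ⟪deriv w t, w t⟫) :=
    fun t => (hEd t).deriv
  have hkey : ∀ t ∈ Ici (0 : ℝ), deriv E t ≤ 0 := by
    intro t ht
    have h1 : deriv w t = -((c : ℂ) * v t) - (q t : ℂ) * w t := by
      have := heq t ht
      push_cast [hc] at this ⊢
      rw [hw]
      linear_combination this
    have h2 : ⟪w t, deriv w t⟫ = -(c * ⟪w t, v t⟫) - q t * ⟪w t, w t⟫ := by
      rw [h1]
      have e1 : (c : ℂ) * v t = (c : ℝ) • v t := by simp [Complex.real_smul]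
      have e2 : (q t : ℂ) * w t = (q t : ℝ) • w t := by simp [Complex.real_smul]
      rw [e1, e2, inner_sub_right, inner_neg_right, real_inner_smul_right,
        real_inner_smul_right]
    have h3 : ⟪deriv w t, w t⟫ = -(c * ⟪v t, w t⟫) - q t * ⟪w t, w t⟫ := by
      have hsym := real_inner_comm (deriv w t) (w t)
      rw [← hsym, h2, real_inner_comm (v t) (w t)]
    rw [hEderiv, h2, h3]
    have hq' := hq0 t
    have hn : (0 : ℝ) ≤ ⟪w t, w t⟫ := real_inner_self_nonneg
    nlinarith
  have hEcont : Continuous E := by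
    have : Continuous w := hw1.continuous
    have hvc : Continuous v := hv.continuous
    exact (continuous_const.mul (hvc.inner hvc)).add (this.inner this)
  have hanti : AntitoneOn E (Ici (0 : ℝ)) := by
    apply antitoneOn_of_deriv_nonpos (convex_Ici 0) hEcont.continuousOn
    · intro t _
      exact (hEd t).differentiableAt.differentiableWithinAt
    · intro t ht
      exact hkey t (interior_subset ht)
  intro t ht
  have hle : E t ≤ E 0 := hanti (self_mem_Ici) ht ht
  have hnorm : ∀ z : ℂ, ⟪z, z⟫ = ‖z‖ ^ 2 := fun z => real_inner_self_eq_norm_sq z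
  have hE0 : E 0 = c * ‖v₀‖ ^ 2 + ‖v₁‖ ^ 2 := by
    simp only [hE]
    rw [hv0, hv1, hnorm, hnorm]
  have hEt : c * ‖v t‖ ^ 2 ≤ E t := by
    have hn : (0 : ℝ) ≤ ‖w t‖ ^ 2 := by positivity
    simp only [hE, hnorm]
    linarith
  have hsq : ‖v t‖ ^ 2 ≤ ‖v₀‖ ^ 2 + ‖v₁‖ ^ 2 / c := by
    have h4 : c * ‖v t‖ ^ 2 ≤ c * (‖v₀‖ ^ 2 + ‖v₁‖ ^ 2 / c) := by
      rw [mul_add, mul_div_cancel₀ _ (ne_of_gt hcpos)]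
      calc c * ‖v t‖ ^ 2 ≤ E t := hEt
        _ ≤ E 0 := hle
        _ = c * ‖v₀‖ ^ 2 + ‖v₁‖ ^ 2 := hE0
    exact le_of_mul_le_mul_left h4 hcpos
  calc ‖v t‖ = Real.sqrt (‖v t‖ ^ 2) := by
        rw [Real.sqrt_sq (norm_nonneg _)]
    _ ≤ Real.sqrt (‖v₀‖ ^ 2 + ‖v₁‖ ^ 2 / |ξ| ^ 2) := Real.sqrt_le_sqrt (by rw [← hc]; exact hsq)
end

section
/- Suppose q_ε : [0,∞) → ℝ is continuous, q_ε ≥ 0, v_ε solves v_ε'' + λ v_ε + q_ε v_ε' = n_ε with zero initial data v_ε(0) = v_ε'(0) = 0, λ > 0, and ∫₀^∞ |n_ε(τ)|² dτ ≤ c_ℓ ε^ℓ for every ℓ ∈ ℕ (n_ε is negligible in L²). Then for every T > 0 and every ℓ ∈ ℕ there is C > 0 such that sup_{t∈[0,T]} (λ|v_ε(t)|² + |v_ε'(t)|²) ≤ C ε^ℓ; i.e., (v_ε) is a negligible net uniformly on compact time intervals. -/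
/-!
The energy `E = lam ‖v‖² + ‖v'‖²` satisfies, by the equation, `E' = 2 ⟪v', n⟫ - 2 q ‖v'‖²`,
so `q ≥ 0` and Cauchy–Schwarz give `E' ≤ E + ‖n‖²`. Grönwall's inequality with the integrating
factor `e^{-t}` and `E 0 = 0` yields `E t ≤ e^T ∫₀^∞ ‖n‖²` on `[0, T]`, and the right-hand side
inherits the bound `c_ℓ ε^ℓ`.
-/

open Set MeasureTheory

open Real in
theorem le_exp_mul_add_integral_of_deriv_le {E E' g : ℝ → ℝ} {K t : ℝ} (hK : 0 ≤ K)
    (ht : 0 ≤ t) (hE : ∀ s ∈ Icc 0 t, HasDerivAt E (E' s) s) (hg : Continuous g)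
    (hg_nonneg : ∀ s ∈ Icc 0 t, 0 ≤ g s) (hE' : ∀ s ∈ Ioo 0 t, E' s ≤ K * E s + g s) :
    E t ≤ exp (K * t) * (E 0 + ∫ s in 0..t, g s) := by
  have hwg : Continuous fun u => exp (-(K * u)) * g u := by fun_prop
  set Φ : ℝ → ℝ := fun s => exp (-(K * s)) * E s - ∫ u in 0..s, exp (-(K * u)) * g u
  have hΦ : ∀ s ∈ Icc 0 t,
      HasDerivAt Φ (exp (-(K * s)) * (E' s - K * E s - g s)) s := by
    intro s hs
    have hexp : HasDerivAt (fun u => exp (-(K * u))) (exp (-(K * s)) * -K) s := by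
      simpa using ((hasDerivAt_id s).const_mul K).neg.exp
    exact ((hexp.mul (hE s hs)).sub (hwg.integral_hasStrictDerivAt 0 s).hasDerivAt).congr_deriv
      (by ring)
  have hanti : AntitoneOn Φ (Icc 0 t) := by
    refine antitoneOn_of_deriv_nonpos (convex_Icc 0 t)
      (fun s hs => (hΦ s hs).continuousAt.continuousWithinAt)
      (fun s hs => ?_) (fun s hs => ?_) <;> rw [interior_Icc] at hs
    · exact (hΦ s (Ioo_subset_Icc_self hs)).differentiableAt.differentiableWithinAt
    · rw [(hΦ s (Ioo_subset_Icc_self hs)).deriv]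
      exact mul_nonpos_of_nonneg_of_nonpos (exp_pos _).le (by linarith [hE' s hs])
  have hΦt : Φ t ≤ E 0 := by
    simpa [Φ] using hanti (left_mem_Icc.mpr ht) (right_mem_Icc.mpr ht) ht
  have hweight : ∫ u in 0..t, exp (-(K * u)) * g u ≤ ∫ u in 0..t, g u := by
    refine intervalIntegral.integral_mono_on ht (hwg.intervalIntegrable 0 t)
      (hg.intervalIntegrable 0 t) fun u hu => ?_
    have : exp (-(K * u)) ≤ 1 := exp_le_one_iff.mpr (by nlinarith [hu.1])
    nlinarith [hg_nonneg u hu]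
  calc E t = exp (K * t) * (exp (-(K * t)) * E t) := by
        rw [← mul_assoc, ← exp_add, add_neg_cancel, exp_zero, one_mul]
    _ ≤ exp (K * t) * (E 0 + ∫ s in 0..t, g s) := by
        gcongr
        linarith [hΦt]

section Oscillator

variable {F : Type*} [NormedAddCommGroup F] [InnerProductSpace ℝ F]

noncomputable def oscillatorEnergy (lam : ℝ) (V : ℝ → F) (t : ℝ) : ℝ :=
  lam * ‖V t‖ ^ 2 + ‖deriv V t‖ ^ 2

theorem hasDerivAt_oscillatorEnergy {V : ℝ → F} (hV : ContDiff ℝ 2 V) (lam t : ℝ) :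
    HasDerivAt (oscillatorEnergy lam V)
      (lam * (2 * inner ℝ (V t) (deriv V t)) + 2 * inner ℝ (deriv V t) (deriv (deriv V) t)) t := by
  have hV' : Differentiable ℝ (deriv V) := (hV.deriv' (n := 1)).differentiable one_ne_zero
  exact (((hV.differentiable two_ne_zero) t).hasDerivAt.norm_sq.const_mul lam).add
    (hV' t).hasDerivAt.norm_sq

/-- With `f = z + lam • x + q • y` the left side equals `2 ⟪y, f⟫ - 2 q ‖y‖² ≤ ‖y‖² + ‖f‖²`. -/
theorem oscillator_energy_rate_le {x y z : F} {lam q : ℝ} (hlam : 0 ≤ lam) (hq : 0 ≤ q) :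
    lam * (2 * inner ℝ x y) + 2 * inner ℝ y z
      ≤ lam * ‖x‖ ^ 2 + ‖y‖ ^ 2 + ‖z + lam • x + q • y‖ ^ 2 := by
  set f := z + lam • x + q • y
  have hz : z = f - lam • x - q • y := by simp only [f]; abel
  have hyz : inner ℝ y z = inner ℝ y f - lam * inner ℝ x y - q * ‖y‖ ^ 2 := by
    rw [hz, inner_sub_right, inner_sub_right, real_inner_smul_right, real_inner_smul_right,
      real_inner_self_eq_norm_sq, real_inner_comm x y]
  have hyf := real_inner_le_norm y f
  rw [hyz]
  nlinarith [sq_nonneg (‖y‖ - ‖f‖), mul_nonneg hq (sq_nonneg ‖y‖), mul_nonneg hlam (sq_nonneg ‖x‖)]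

theorem oscillatorEnergy_le_exp_mul {V : ℝ → F} {q : ℝ → ℝ} {lam t : ℝ} (hV : ContDiff ℝ 2 V)
    (hq : Continuous q) (hlam : 0 ≤ lam) (hq_nonneg : ∀ s ∈ Icc 0 t, 0 ≤ q s) (ht : 0 ≤ t) :
    oscillatorEnergy lam V t ≤ Real.exp t * (oscillatorEnergy lam V 0 +
      ∫ s in 0..t, ‖deriv (deriv V) s + lam • V s + q s • deriv V s‖ ^ 2) := by
  have hV' : ContDiff ℝ 1 (deriv V) := hV.deriv'
  have hforcing : Continuous fun s => ‖deriv (deriv V) s + lam • V s + q s • deriv V s‖ ^ 2 := by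
    have := hV.continuous
    have := hV'.continuous
    have := hV'.continuous_deriv le_rfl
    fun_prop
  simpa using le_exp_mul_add_integral_of_deriv_le zero_le_one ht
    (fun s _ => hasDerivAt_oscillatorEnergy hV lam s) hforcing (fun s _ => by positivity)
    (fun s hs => by
      simpa only [one_mul, oscillatorEnergy] using
        oscillator_energy_rate_le hlam (hq_nonneg s (Ioo_subset_Icc_self hs)))

end Oscillator

/-- A solution with zero initial data and negligible right-hand side is itself a
negligible net, uniformly on compact time intervals. -/
theorem negligible_source_negligible_solution
    (lam : ℝ) (hlam : 0 < lam)
    (q : ℝ → ℝ → ℝ) (v : ℝ → ℝ → ℂ) (n : ℝ → ℝ → ℂ)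
    (hqcont : ∀ ε ∈ Ioc (0:ℝ) 1, Continuous (q ε))
    (hqnn : ∀ ε ∈ Ioc (0:ℝ) 1, ∀ t ≥ (0:ℝ), 0 ≤ q ε t)
    (hvsmooth : ∀ ε ∈ Ioc (0:ℝ) 1, ContDiff ℝ 2 (v ε))
    (heq : ∀ ε ∈ Ioc (0:ℝ) 1, ∀ t ≥ (0:ℝ),
      deriv (deriv (v ε)) t + (lam : ℂ) * v ε t + (q ε t : ℂ) * deriv (v ε) t = n ε t)
    (hdata : ∀ ε ∈ Ioc (0:ℝ) 1, v ε 0 = 0 ∧ deriv (v ε) 0 = 0)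
    (hnint : ∀ ε ∈ Ioc (0:ℝ) 1, IntegrableOn (fun τ => ‖n ε τ‖ ^ 2) (Ioi 0))
    (hneg : ∀ ℓ : ℕ, ∃ c > (0:ℝ), ∀ ε ∈ Ioc (0:ℝ) 1,
      ∫ τ in Ioi (0:ℝ), ‖n ε τ‖ ^ 2 ≤ c * ε ^ ℓ) :
    ∀ T > (0:ℝ), ∀ ℓ : ℕ, ∃ C > (0:ℝ), ∀ ε ∈ Ioc (0:ℝ) 1, ∀ t ∈ Icc (0:ℝ) T,
      lam * ‖v ε t‖ ^ 2 + ‖deriv (v ε) t‖ ^ 2 ≤ C * ε ^ ℓ := by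
  intro T _ ℓ
  obtain ⟨c, hc, hnc⟩ := hneg ℓ
  refine ⟨Real.exp T * c, by positivity, fun ε hε t ht => ?_⟩
  have henergy := oscillatorEnergy_le_exp_mul (hvsmooth ε hε) (hqcont ε hε) hlam.le
    (fun s hs => hqnn ε hε s hs.1) ht.1
  have hforcing : ∫ s in 0..t, ‖deriv (deriv (v ε)) s + lam • v ε s + q ε s • deriv (v ε) s‖ ^ 2
      = ∫ s in 0..t, ‖n ε s‖ ^ 2 := by
    refine intervalIntegral.integral_congr fun s hs => ?_
    rw [uIcc_of_le ht.1] at hs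
    simp only [Complex.real_smul, heq ε hε s hs.1]
  have hsource : ∫ s in 0..t, ‖n ε s‖ ^ 2 ≤ ∫ s in Ioi 0, ‖n ε s‖ ^ 2 := by
    rw [intervalIntegral.integral_of_le ht.1]
    exact setIntegral_mono_set (hnint ε hε) (.of_forall fun s => by positivity)
      Ioc_subset_Ioi_self.eventuallyLE
  rw [hforcing, oscillatorEnergy, oscillatorEnergy, (hdata ε hε).1, (hdata ε hε).2] at henergy
  calc lam * ‖v ε t‖ ^ 2 + ‖deriv (v ε) t‖ ^ 2
      ≤ Real.exp t * ∫ s in 0..t, ‖n ε s‖ ^ 2 := by simpa using henergy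
    _ ≤ Real.exp T * (c * ε ^ ℓ) :=
        mul_le_mul (Real.exp_le_exp.mpr ht.2) (hsource.trans (hnc ε hε))
          (intervalIntegral.integral_nonneg ht.1 fun _ _ => by positivity) (Real.exp_pos T).le
    _ = Real.exp T * c * ε ^ ℓ := by ring
end
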